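/- arXiv:2307.11578 — 9 statements merged into one kernel-verified Lean document; each statement's English description precedes it below -/
import Mathlib

section
/- Let μ and A be real numbers with μ·A > 0. Then the function u(x,t) = 8μ²/(μ + A·cosh(2t−x) − A·sinh(2t−x))² − 8μ/(μ + A·cosh(2t−x) − A·sinh(2t−x)) (whose denominator μ + A·e^{x−2t} never vanishes) is a smooth classical solution of the modified Camassa–Holm equation on all of ℝ²: u_t − u_{xxt} + 3u²u_x = 2u_x u_{xx} + u u_{xxx} for all (x,t) ∈ ℝ². -/
/-- Partial derivative in the first (space) variable. -/
noncomputable def px (u : ℝ → ℝ → ℝ) : ℝ → ℝ → ℝ :=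
  fun x t => deriv (fun y => u y t) x

/-- Partial derivative in the second (time) variable. -/
noncomputable def pt (u : ℝ → ℝ → ℝ) : ℝ → ℝ → ℝ :=
  fun x t => deriv (fun s => u x s) t

noncomputable def mchG0 (μ A s : ℝ) : ℝ :=
  8 * μ ^ 2 / (μ + A * Real.exp s) ^ 2 - 8 * μ / (μ + A * Real.exp s)

noncomputable def mchG1 (μ A s : ℝ) : ℝ :=
  (-16 * μ ^ 2 * A) * Real.exp s / (μ + A * Real.exp s) ^ 3
    + (8 * μ * A) * Real.exp s / (μ + A * Real.exp s) ^ 2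

noncomputable def mchG2 (μ A s : ℝ) : ℝ :=
  (-16 * μ ^ 2 * A) * Real.exp s * (μ - 2 * A * Real.exp s) / (μ + A * Real.exp s) ^ 4
    + (8 * μ * A) * Real.exp s * (μ - A * Real.exp s) / (μ + A * Real.exp s) ^ 3

noncomputable def mchG3 (μ A s : ℝ) : ℝ :=
  ((-16) * μ ^ 4 * A * Real.exp s + 112 * μ ^ 3 * A ^ 2 * Real.exp s ^ 2
      - 64 * μ ^ 2 * A ^ 3 * Real.exp s ^ 3) / (μ + A * Real.exp s) ^ 5
    + (8 * μ ^ 3 * A * Real.exp s - 32 * μ ^ 2 * A ^ 2 * Real.exp s ^ 2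
      + 8 * μ * A ^ 3 * Real.exp s ^ 3) / (μ + A * Real.exp s) ^ 4

lemma mch_hden (μ A : ℝ) (s : ℝ) :
    HasDerivAt (fun x : ℝ => μ + A * Real.exp x) (A * Real.exp s) s :=
  ((Real.hasDerivAt_exp s).const_mul A).const_add μ

lemma mch_hG0 (μ A : ℝ) (hD : ∀ s : ℝ, μ + A * Real.exp s ≠ 0) (s : ℝ) :
    HasDerivAt (mchG0 μ A) (mchG1 μ A s) s := by
  have hDs := hD s
  have hden := mch_hden μ A s
  have h := ((hasDerivAt_const s (8 * μ ^ 2)).div (hden.pow 2) (pow_ne_zero 2 hDs)).sub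
    ((hasDerivAt_const s (8 * μ)).div hden hDs)
  refine h.congr_deriv ?_
  simp only [mchG1, Pi.pow_apply]
  field_simp
  ring

lemma mch_hG1 (μ A : ℝ) (hD : ∀ s : ℝ, μ + A * Real.exp s ≠ 0) (s : ℝ) :
    HasDerivAt (mchG1 μ A) (mchG2 μ A s) s := by
  have hDs := hD s
  have hden := mch_hden μ A s
  have he := Real.hasDerivAt_exp s
  have h := (((he.const_mul (-16 * μ ^ 2 * A)).div (hden.pow 3) (pow_ne_zero 3 hDs))).add
    (((he.const_mul (8 * μ * A)).div (hden.pow 2) (pow_ne_zero 2 hDs)))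
  refine h.congr_deriv ?_
  simp only [mchG2, Pi.pow_apply]
  field_simp
  ring

lemma mch_hG2 (μ A : ℝ) (hD : ∀ s : ℝ, μ + A * Real.exp s ≠ 0) (s : ℝ) :
    HasDerivAt (mchG2 μ A) (mchG3 μ A s) s := by
  have hDs := hD s
  have hden := mch_hden μ A s
  have he := Real.hasDerivAt_exp s
  have hn1 : HasDerivAt (fun x : ℝ => (-16 * μ ^ 2 * A) * Real.exp x * (μ - 2 * A * Real.exp x))
      ((-16 * μ ^ 2 * A * Real.exp s) * (μ - 2 * A * Real.exp s)
        + (-16 * μ ^ 2 * A * Real.exp s) * (-(2 * A * Real.exp s))) s :=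
    (he.const_mul (-16 * μ ^ 2 * A)).mul (((he.const_mul (2 * A))).const_sub μ)
  have hn2 : HasDerivAt (fun x : ℝ => (8 * μ * A) * Real.exp x * (μ - A * Real.exp x))
      ((8 * μ * A * Real.exp s) * (μ - A * Real.exp s)
        + (8 * μ * A * Real.exp s) * (-(A * Real.exp s))) s :=
    (he.const_mul (8 * μ * A)).mul (((he.const_mul A)).const_sub μ)
  have h := (hn1.div (hden.pow 4) (pow_ne_zero 4 hDs)).add
    (hn2.div (hden.pow 3) (pow_ne_zero 3 hDs))
  refine h.congr_deriv ?_
  simp only [mchG3, Pi.pow_apply]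
  field_simp
  ring

/-- The soliton solution `u = 8μ²/D² − 8μ/D`, `D = μ + A cosh(2t−x) − A sinh(2t−x)`,
with `μ A > 0`, is a smooth classical solution of the modified Camassa–Holm equation
`u_t − u_{xxt} + 3u²u_x = 2u_x u_{xx} + u u_{xxx}` on all of `ℝ²`,
and its denominator never vanishes. -/
theorem mCH_soliton_two_param (μ A : ℝ) (hμA : μ * A > 0) (u : ℝ → ℝ → ℝ)
    (hu : u = fun x t =>
      8 * μ ^ 2 / (μ + A * Real.cosh (2 * t - x) - A * Real.sinh (2 * t - x)) ^ 2
        - 8 * μ / (μ + A * Real.cosh (2 * t - x) - A * Real.sinh (2 * t - x))) :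
    (∀ x t : ℝ, μ + A * Real.cosh (2 * t - x) - A * Real.sinh (2 * t - x) ≠ 0) ∧
    ContDiff ℝ (⊤ : ℕ∞) (fun p : ℝ × ℝ => u p.1 p.2) ∧
    (∀ x t : ℝ,
      pt u x t - pt (px (px u)) x t + 3 * (u x t) ^ 2 * px u x t
        = 2 * px u x t * px (px u) x t + u x t * px (px (px u)) x t) := by
  have hD : ∀ s : ℝ, μ + A * Real.exp s ≠ 0 := by
    intro s h0
    have he : 0 < Real.exp s := Real.exp_pos s
    have h1 : 0 < μ * (μ + A * Real.exp s) := by nlinarith [sq_nonneg μ, mul_pos hμA he]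
    rw [h0, mul_zero] at h1
    exact lt_irrefl 0 h1
  have hden_eq : ∀ x t : ℝ, μ + A * Real.cosh (2 * t - x) - A * Real.sinh (2 * t - x)
      = μ + A * Real.exp (x - 2 * t) := by
    intro x t
    have h1 := Real.cosh_sub_sinh (2 * t - x)
    have h2 : (-(2 * t - x)) = x - 2 * t := by ring
    rw [h2] at h1
    rw [← h1]
    ring
  have hueq : u = fun x t => mchG0 μ A (x - 2 * t) := by
    rw [hu]
    funext x t
    rw [hden_eq x t]
    rfl
  refine ⟨fun x t => by rw [hden_eq x t]; exact hD _, ?_, ?_⟩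
  · -- smoothness
    have hc : ContDiff ℝ (⊤ : ℕ∞) (fun s : ℝ => μ + A * Real.exp s) :=
      contDiff_const.add (contDiff_const.mul Real.contDiff_exp)
    have hG0c : ContDiff ℝ (⊤ : ℕ∞) (mchG0 μ A) :=
      (contDiff_const.div (hc.pow 2) (fun s => pow_ne_zero 2 (hD s))).sub
        (contDiff_const.div hc hD)
    have hlin : ContDiff ℝ (⊤ : ℕ∞) (fun p : ℝ × ℝ => p.1 - 2 * p.2) :=
      contDiff_fst.sub (contDiff_const.mul contDiff_snd)
    rw [hueq]
    exact hG0c.comp hlin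
  · -- PDE
    have hpx : px u = fun x t => mchG1 μ A (x - 2 * t) := by
      funext x t
      show deriv (fun y => u y t) x = _
      rw [hueq]
      have h : HasDerivAt (fun y : ℝ => mchG0 μ A (y - 2 * t)) (mchG1 μ A (x - 2 * t)) x := by
        exact ((mch_hG0 μ A hD (x - 2 * t)).comp x ((hasDerivAt_id x).sub_const (2 * t))).congr_deriv (mul_one _)
      exact h.deriv
    have hpxx : px (px u) = fun x t => mchG2 μ A (x - 2 * t) := by
      funext x t
      show deriv (fun y => px u y t) x = _
      rw [hpx]
      have h : HasDerivAt (fun y : ℝ => mchG1 μ A (y - 2 * t)) (mchG2 μ A (x - 2 * t)) x := by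
        exact ((mch_hG1 μ A hD (x - 2 * t)).comp x ((hasDerivAt_id x).sub_const (2 * t))).congr_deriv (mul_one _)
      exact h.deriv
    have hpxxx : px (px (px u)) = fun x t => mchG3 μ A (x - 2 * t) := by
      funext x t
      show deriv (fun y => px (px u) y t) x = _
      rw [hpxx]
      have h : HasDerivAt (fun y : ℝ => mchG2 μ A (y - 2 * t)) (mchG3 μ A (x - 2 * t)) x := by
        exact ((mch_hG2 μ A hD (x - 2 * t)).comp x ((hasDerivAt_id x).sub_const (2 * t))).congr_deriv (mul_one _)
      exact h.deriv
    have htime : ∀ x t : ℝ, HasDerivAt (fun s : ℝ => x - 2 * s) (-2 : ℝ) t := by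
      intro x t
      simpa using ((hasDerivAt_id t).const_mul (2 : ℝ)).const_sub x
    have hpt : pt u = fun x t => mchG1 μ A (x - 2 * t) * (-2) := by
      funext x t
      show deriv (fun s => u x s) t = _
      rw [hueq]
      exact ((mch_hG0 μ A hD (x - 2 * t)).comp t (htime x t)).deriv
    have hptxx : pt (px (px u)) = fun x t => mchG3 μ A (x - 2 * t) * (-2) := by
      funext x t
      show deriv (fun s => px (px u) x s) t = _
      rw [hpxx]
      exact ((mch_hG2 μ A hD (x - 2 * t)).comp t (htime x t)).deriv
    intro x t
    rw [hpt, hptxx, hpxxx, hpxx, hpx, hueq]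
    simp only
    set s := x - 2 * t with hs
    have hDs := hD s
    have hE := Real.exp_pos s
    simp only [mchG0, mchG1, mchG2, mchG3]
    field_simp
    ring
end

section
/- The function u(x,t) = −2·cosh⁻²((x−2t)/2) is a smooth classical solution of the modified Camassa–Holm equation on all of ℝ²: u_t − u_{xxt} + 3u²u_x = 2u_x u_{xx} + u u_{xxx} for all (x,t) ∈ ℝ². -/
noncomputable def F0 (y : ℝ) : ℝ := -2 / Real.cosh y ^ 2
noncomputable def F1 (y : ℝ) : ℝ := 4 * Real.sinh y / Real.cosh y ^ 3
noncomputable def F2 (y : ℝ) : ℝ := (4 * Real.cosh y ^ 2 - 12 * Real.sinh y ^ 2) / Real.cosh y ^ 4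
noncomputable def F3 (y : ℝ) : ℝ := (-32 * Real.cosh y ^ 2 * Real.sinh y + 48 * Real.sinh y ^ 3) / Real.cosh y ^ 5

lemma hc (y : ℝ) : Real.cosh y ≠ 0 := (Real.cosh_pos y).ne'

lemma hF0 (y : ℝ) : HasDerivAt F0 (F1 y) y := by
  have h := (hasDerivAt_const y (-2:ℝ)).div ((Real.hasDerivAt_cosh y).pow 2)
    (pow_ne_zero 2 (hc y))
  refine h.congr_deriv ?_
  have := hc y
  simp only [F1, Pi.pow_apply]
  field_simp
  ring

lemma hF1 (y : ℝ) : HasDerivAt F1 (F2 y) y := by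
  have h := ((Real.hasDerivAt_sinh y).const_mul 4).div ((Real.hasDerivAt_cosh y).pow 3)
    (pow_ne_zero 3 (hc y))
  refine h.congr_deriv ?_
  have := hc y
  simp only [F2, Pi.pow_apply]
  field_simp
  ring

lemma hF2 (y : ℝ) : HasDerivAt F2 (F3 y) y := by
  have hn : HasDerivAt (fun y => 4 * Real.cosh y ^ 2 - 12 * Real.sinh y ^ 2)
      (4 * (2 * Real.cosh y ^ 1 * Real.sinh y) - 12 * (2 * Real.sinh y ^ 1 * Real.cosh y)) y :=
    (((Real.hasDerivAt_cosh y).pow 2).const_mul 4).sub (((Real.hasDerivAt_sinh y).pow 2).const_mul 12)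
  have h := hn.div ((Real.hasDerivAt_cosh y).pow 4) (pow_ne_zero 4 (hc y))
  refine h.congr_deriv ?_
  have := hc y
  simp only [F3, Pi.pow_apply]
  field_simp
  ring

lemma px_comp (F G : ℝ → ℝ) (hF : ∀ y, HasDerivAt F (G y) y) :
    px (fun x t => F ((x - 2 * t) / 2)) = fun x t => G ((x - 2 * t) / 2) / 2 := by
  funext x t
  have hi : HasDerivAt (fun y : ℝ => (y - 2 * t) / 2) (1 / 2) x := by
    simpa using ((hasDerivAt_id x).sub_const (2 * t)).div_const 2
  have h : HasDerivAt (fun y => F ((y - 2 * t) / 2)) (G ((x - 2 * t) / 2) * (1 / 2)) x :=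
    (hF ((x - 2 * t) / 2)).comp x hi
  simp only [px]
  rw [h.deriv]
  ring

lemma pt_comp (F G : ℝ → ℝ) (hF : ∀ y, HasDerivAt F (G y) y) :
    pt (fun x t => F ((x - 2 * t) / 2)) = fun x t => -G ((x - 2 * t) / 2) := by
  funext x t
  have hi : HasDerivAt (fun s : ℝ => (x - 2 * s) / 2) (-1) t := by
    have : HasDerivAt (fun s : ℝ => x - 2 * s) (0 - 2 * 1) t :=
      (hasDerivAt_const t x).sub ((hasDerivAt_id t).const_mul 2)
    simpa using this.div_const 2
  have h : HasDerivAt (fun s => F ((x - 2 * s) / 2)) (G ((x - 2 * t) / 2) * (-1)) t :=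
    (hF ((x - 2 * t) / 2)).comp t hi
  simp only [pt]
  rw [h.deriv]
  ring

/-- The function `u(x,t) = −2 cosh⁻²((x−2t)/2)` is a smooth classical solution of the
modified Camassa–Holm equation `u_t − u_{xxt} + 3u²u_x = 2u_x u_{xx} + u u_{xxx}`
on all of `ℝ²`. -/
theorem mCH_soliton (u : ℝ → ℝ → ℝ)
    (hu : u = fun x t => -2 / (Real.cosh ((x - 2 * t) / 2)) ^ 2) :
    ContDiff ℝ (⊤ : ℕ∞) (fun p : ℝ × ℝ => u p.1 p.2) ∧
    (∀ x t : ℝ,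
      pt u x t - pt (px (px u)) x t + 3 * (u x t) ^ 2 * px u x t
        = 2 * px u x t * px (px u) x t + u x t * px (px (px u)) x t) := by
  have hu0 : u = fun x t => F0 ((x - 2 * t) / 2) := by rw [hu]; rfl
  constructor
  · rw [hu]
    have hinner : ContDiff ℝ (⊤ : ℕ∞) (fun p : ℝ × ℝ => (p.1 - 2 * p.2) / 2) :=
      (contDiff_fst.sub (contDiff_const.mul contDiff_snd)).div_const 2
    exact contDiff_const.div ((Real.contDiff_cosh.comp hinner).pow 2)
      (fun p => pow_ne_zero 2 (hc _))
  · intro x t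
    have e1 : px u = fun x t => F1 ((x - 2 * t) / 2) / 2 := by
      rw [hu0]; exact px_comp F0 F1 hF0
    have e2 : px (px u) = fun x t => F2 ((x - 2 * t) / 2) / 4 := by
      rw [e1]
      have := px_comp F1 F2 hF1
      have e : (fun (x t : ℝ) => F1 ((x - 2 * t) / 2) / 2) =
          fun x t => (fun y => F1 y / 2) ((x - 2 * t) / 2) := rfl
      rw [e, px_comp (fun y => F1 y / 2) (fun y => F2 y / 2)
        (fun y => (hF1 y).div_const 2)]
      funext a b; ring
    have e3 : px (px (px u)) = fun x t => F3 ((x - 2 * t) / 2) / 8 := by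
      rw [e2]
      have e : (fun (x t : ℝ) => F2 ((x - 2 * t) / 2) / 4) =
          fun x t => (fun y => F2 y / 4) ((x - 2 * t) / 2) := rfl
      rw [e, px_comp (fun y => F2 y / 4) (fun y => F3 y / 4)
        (fun y => (hF2 y).div_const 4)]
      funext a b; ring
    have et : pt u = fun x t => -F1 ((x - 2 * t) / 2) := by
      rw [hu0]; exact pt_comp F0 F1 hF0
    have et2 : pt (px (px u)) = fun x t => -(F3 ((x - 2 * t) / 2) / 4) := by
      rw [e2]
      have e : (fun (x t : ℝ) => F2 ((x - 2 * t) / 2) / 4) =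
          fun x t => (fun y => F2 y / 4) ((x - 2 * t) / 2) := rfl
      rw [e, pt_comp (fun y => F2 y / 4) (fun y => F3 y / 4)
        (fun y => (hF2 y).div_const 4)]
    rw [et, et2, e3, e2, e1, hu0]
    set y := (x - 2 * t) / 2
    have hcy := hc y
    have hsq : Real.sinh y ^ 2 = Real.cosh y ^ 2 - 1 := Real.sinh_sq y
    have h3 : Real.sinh y ^ 3 = (Real.cosh y ^ 2 - 1) * Real.sinh y := by
      rw [pow_succ, hsq]
    simp only [F0, F1, F2, F3]
    rw [h3, hsq]
    field_simp
    ring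
end

section
/- Let u(x,t) = 2·sinh⁻²(|x−2t|/2 + log(1+√2)). Then at every point (x,t) ∈ ℝ² with x ≠ 2t, the function u is smooth and satisfies the modified Camassa–Holm equation pointwise: u_t − u_{xxt} + 3u²u_x = 2u_x u_{xx} + u u_{xxx}. -/
open Real Filter

/-! ### Auxiliary functions: the traveling-wave profile and its derivatives -/

noncomputable def Fc (r : ℝ) : ℝ :=
  2 / (Real.sinh (r / 2 + Real.log (1 + Real.sqrt 2))) ^ 2
noncomputable def Fc1 (r : ℝ) : ℝ :=
  -2 * Real.cosh (r / 2 + Real.log (1 + Real.sqrt 2)) /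
    (Real.sinh (r / 2 + Real.log (1 + Real.sqrt 2))) ^ 3
noncomputable def Fc2 (r : ℝ) : ℝ :=
  (3 * Real.cosh (r / 2 + Real.log (1 + Real.sqrt 2)) ^ 2 -
    Real.sinh (r / 2 + Real.log (1 + Real.sqrt 2)) ^ 2) /
    (Real.sinh (r / 2 + Real.log (1 + Real.sqrt 2))) ^ 4
noncomputable def Fc3 (r : ℝ) : ℝ :=
  (-2 * Real.cosh (r / 2 + Real.log (1 + Real.sqrt 2)) ^ 3 -
    4 * Real.cosh (r / 2 + Real.log (1 + Real.sqrt 2))) /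
    (Real.sinh (r / 2 + Real.log (1 + Real.sqrt 2))) ^ 5

lemma hzder (r : ℝ) :
    HasDerivAt (fun r : ℝ => r / 2 + Real.log (1 + Real.sqrt 2)) (1/2) r :=
  ((hasDerivAt_id r).div_const 2).add_const _

lemma hSder (r : ℝ) :
    HasDerivAt (fun r : ℝ => Real.sinh (r / 2 + Real.log (1 + Real.sqrt 2)))
      (Real.cosh (r / 2 + Real.log (1 + Real.sqrt 2)) * (1/2)) r :=
  (Real.hasDerivAt_sinh _).comp r (hzder r)

lemma hKder (r : ℝ) :
    HasDerivAt (fun r : ℝ => Real.cosh (r / 2 + Real.log (1 + Real.sqrt 2)))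
      (Real.sinh (r / 2 + Real.log (1 + Real.sqrt 2)) * (1/2)) r :=
  (Real.hasDerivAt_cosh _).comp r (hzder r)

lemma log_pos' : (0:ℝ) < Real.log (1 + Real.sqrt 2) := by
  apply Real.log_pos; nlinarith [Real.sqrt_pos.2 (by norm_num : (0:ℝ) < 2)]

lemma sinh_ne (r : ℝ) (hr : 0 ≤ r) :
    Real.sinh (r / 2 + Real.log (1 + Real.sqrt 2)) ≠ 0 := by
  have h2 := log_pos'
  have : 0 < r / 2 + Real.log (1 + Real.sqrt 2) := by linarith
  exact ne_of_gt (Real.sinh_pos_iff.2 this)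

lemma hF (r : ℝ) (hr : 0 ≤ r) : HasDerivAt Fc (Fc1 r) r := by
  have hne := sinh_ne r hr
  have h := (hasDerivAt_const r (2:ℝ)).div ((hSder r).pow 2) (pow_ne_zero 2 hne)
  refine h.congr_deriv (Eq.symm ?_)
  simp only [Pi.pow_apply, Pi.div_apply, Pi.sub_apply]
  unfold Fc1
  set S := Real.sinh (r / 2 + Real.log (1 + Real.sqrt 2)) with hS
  set K := Real.cosh (r / 2 + Real.log (1 + Real.sqrt 2)) with hK
  field_simp
  ring

lemma hF1_s2 (r : ℝ) (hr : 0 ≤ r) : HasDerivAt Fc1 (Fc2 r) r := by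
  have hne := sinh_ne r hr
  have h := (((hKder r).const_mul (-2 : ℝ))).div ((hSder r).pow 3) (pow_ne_zero 3 hne)
  refine h.congr_deriv (Eq.symm ?_)
  simp only [Pi.pow_apply, Pi.div_apply, Pi.sub_apply]
  unfold Fc2
  set S := Real.sinh (r / 2 + Real.log (1 + Real.sqrt 2)) with hS
  set K := Real.cosh (r / 2 + Real.log (1 + Real.sqrt 2)) with hK
  field_simp
  ring

lemma hF2_s2 (r : ℝ) (hr : 0 ≤ r) : HasDerivAt Fc2 (Fc3 r) r := by
  have hne := sinh_ne r hr
  have hK2 := Real.cosh_sq' (r / 2 + Real.log (1 + Real.sqrt 2))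
  have h := ((((hKder r).pow 2).const_mul (3:ℝ)).sub ((hSder r).pow 2)).div
      ((hSder r).pow 4) (pow_ne_zero 4 hne)
  refine h.congr_deriv (Eq.symm ?_)
  simp only [Pi.pow_apply, Pi.div_apply, Pi.sub_apply]
  unfold Fc3
  set S := Real.sinh (r / 2 + Real.log (1 + Real.sqrt 2)) with hS
  set K := Real.cosh (r / 2 + Real.log (1 + Real.sqrt 2)) with hK
  field_simp
  linear_combination (8*K*S^3) * hK2

/-- The key algebraic identity: the traveling-wave ODE for the mCH profile. -/
lemma key_ident (r : ℝ) (hr : 0 ≤ r) :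
    -2 * Fc1 r + 2 * Fc3 r + 3 * (Fc r) ^ 2 * Fc1 r
      = 2 * Fc1 r * Fc2 r + Fc r * Fc3 r := by
  have hne := sinh_ne r hr
  have hK2 := Real.cosh_sq' (r / 2 + Real.log (1 + Real.sqrt 2))
  unfold Fc Fc1 Fc2 Fc3
  set S := Real.sinh (r / 2 + Real.log (1 + Real.sqrt 2)) with hS
  set K := Real.cosh (r / 2 + Real.log (1 + Real.sqrt 2)) with hK
  field_simp
  linear_combination (8*K - 2*K*S^2) * hK2

lemma FcSmooth (r : ℝ) (hr : 0 ≤ r) : ContDiffAt ℝ (⊤ : ℕ∞) Fc r := by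
  have h1 : ContDiffAt ℝ (⊤ : ℕ∞) (fun r : ℝ => Real.sinh (r / 2 + Real.log (1 + Real.sqrt 2))) r :=
    Real.contDiff_sinh.contDiffAt.comp r
      (((contDiff_id.div_const 2).add contDiff_const).contDiffAt)
  exact contDiffAt_const.div (h1.pow 2) (pow_ne_zero 2 (sinh_ne r hr))

noncomputable def U : ℝ → ℝ → ℝ := fun y s => Fc |y - 2 * s|

lemma evpos (y s : ℝ) (h : 2 * s < y) :
    (fun y' => U y' s) =ᶠ[nhds y] (fun y' => Fc (y' - 2 * s)) := by
  filter_upwards [eventually_gt_nhds h] with a ha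
  unfold U
  rw [abs_of_pos (by linarith)]

lemma evneg (y s : ℝ) (h : y < 2 * s) :
    (fun y' => U y' s) =ᶠ[nhds y] (fun y' => Fc (2 * s - y')) := by
  filter_upwards [eventually_lt_nhds h] with a ha
  unfold U
  rw [abs_of_neg (by linarith)]
  ring_nf

lemma P1 (y s : ℝ) (h : 2 * s < y) : px U y s = Fc1 (y - 2 * s) := by
  have hd : HasDerivAt (fun y' => Fc (y' - 2 * s)) (Fc1 (y - 2 * s)) y := by
    simpa [Function.comp_def] using (hF (y - 2 * s) (by linarith)).comp y ((hasDerivAt_id y).sub_const (2 * s))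
  unfold px
  rw [(evpos y s h).deriv_eq, hd.deriv]

lemma N1 (y s : ℝ) (h : y < 2 * s) : px U y s = -Fc1 (2 * s - y) := by
  have hg : HasDerivAt (fun y' : ℝ => 2 * s - y') (-1) y := by
    simpa using (hasDerivAt_id y).const_sub (2 * s)
  have hd : HasDerivAt (fun y' => Fc (2 * s - y')) (-Fc1 (2 * s - y)) y := by
    simpa [Function.comp_def] using (hF (2 * s - y) (by linarith)).comp y hg
  unfold px
  rw [(evneg y s h).deriv_eq, hd.deriv]

lemma P2 (y s : ℝ) (h : 2 * s < y) : px (px U) y s = Fc2 (y - 2 * s) := by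
  have hev : (fun y' => px U y' s) =ᶠ[nhds y] (fun y' => Fc1 (y' - 2 * s)) := by
    filter_upwards [eventually_gt_nhds h] with a ha
    exact P1 a s ha
  have hd : HasDerivAt (fun y' => Fc1 (y' - 2 * s)) (Fc2 (y - 2 * s)) y := by
    simpa [Function.comp_def] using (hF1_s2 (y - 2 * s) (by linarith)).comp y ((hasDerivAt_id y).sub_const (2 * s))
  show deriv (fun y' => px U y' s) y = _
  rw [hev.deriv_eq, hd.deriv]

lemma N2 (y s : ℝ) (h : y < 2 * s) : px (px U) y s = Fc2 (2 * s - y) := by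
  have hev : (fun y' => px U y' s) =ᶠ[nhds y] (fun y' => -Fc1 (2 * s - y')) := by
    filter_upwards [eventually_lt_nhds h] with a ha
    exact N1 a s ha
  have hg : HasDerivAt (fun y' : ℝ => 2 * s - y') (-1) y := by
    simpa using (hasDerivAt_id y).const_sub (2 * s)
  have hd : HasDerivAt (fun y' => -Fc1 (2 * s - y')) (Fc2 (2 * s - y)) y := by
    simpa [Function.comp_def, Pi.neg_def] using ((hF1_s2 (2 * s - y) (by linarith)).comp y hg).neg
  show deriv (fun y' => px U y' s) y = _
  rw [hev.deriv_eq, hd.deriv]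

lemma P3 (y s : ℝ) (h : 2 * s < y) : px (px (px U)) y s = Fc3 (y - 2 * s) := by
  have hev : (fun y' => px (px U) y' s) =ᶠ[nhds y] (fun y' => Fc2 (y' - 2 * s)) := by
    filter_upwards [eventually_gt_nhds h] with a ha
    exact P2 a s ha
  have hd : HasDerivAt (fun y' => Fc2 (y' - 2 * s)) (Fc3 (y - 2 * s)) y := by
    simpa [Function.comp_def] using (hF2_s2 (y - 2 * s) (by linarith)).comp y ((hasDerivAt_id y).sub_const (2 * s))
  show deriv (fun y' => px (px U) y' s) y = _
  rw [hev.deriv_eq, hd.deriv]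

lemma N3 (y s : ℝ) (h : y < 2 * s) : px (px (px U)) y s = -Fc3 (2 * s - y) := by
  have hev : (fun y' => px (px U) y' s) =ᶠ[nhds y] (fun y' => Fc2 (2 * s - y')) := by
    filter_upwards [eventually_lt_nhds h] with a ha
    exact N2 a s ha
  have hg : HasDerivAt (fun y' : ℝ => 2 * s - y') (-1) y := by
    simpa using (hasDerivAt_id y).const_sub (2 * s)
  have hd : HasDerivAt (fun y' => Fc2 (2 * s - y')) (-Fc3 (2 * s - y)) y := by
    simpa [Function.comp_def] using (hF2_s2 (2 * s - y) (by linarith)).comp y hg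
  show deriv (fun y' => px (px U) y' s) y = _
  rw [hev.deriv_eq, hd.deriv]

/-- Value of `pt U` on the right of the crest. -/
lemma Tpos (x t : ℝ) (h : 2 * t < x) : pt U x t = Fc1 (x - 2 * t) * (-2) := by
  have hev : (fun s => U x s) =ᶠ[nhds t] (fun s => Fc (x - 2 * s)) := by
    filter_upwards [eventually_lt_nhds (show t < x / 2 by linarith)] with a ha
    unfold U
    rw [abs_of_pos (by linarith)]
  have hg : HasDerivAt (fun s : ℝ => x - 2 * s) (-2) t := by
    simpa using ((hasDerivAt_id t).const_mul (2:ℝ)).const_sub x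
  have hd : HasDerivAt (fun s => Fc (x - 2 * s)) (Fc1 (x - 2 * t) * (-2)) t :=
    by have := (hF (x - 2 * t) (by linarith)).comp t hg; exact this
  unfold pt
  rw [hev.deriv_eq, hd.deriv]

lemma Tneg (x t : ℝ) (h : x < 2 * t) : pt U x t = Fc1 (2 * t - x) * 2 := by
  have hev : (fun s => U x s) =ᶠ[nhds t] (fun s => Fc (2 * s - x)) := by
    filter_upwards [eventually_gt_nhds (show x / 2 < t by linarith)] with a ha
    unfold U
    rw [abs_of_neg (by linarith)]
    ring_nf
  have hg : HasDerivAt (fun s : ℝ => 2 * s - x) 2 t := by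
    simpa using ((hasDerivAt_id t).const_mul (2:ℝ)).sub_const x
  have hd : HasDerivAt (fun s => Fc (2 * s - x)) (Fc1 (2 * t - x) * 2) t :=
    by have := (hF (2 * t - x) (by linarith)).comp t hg; exact this
  unfold pt
  rw [hev.deriv_eq, hd.deriv]

lemma T2pos (x t : ℝ) (h : 2 * t < x) :
    pt (px (px U)) x t = Fc3 (x - 2 * t) * (-2) := by
  have hev : (fun s => px (px U) x s) =ᶠ[nhds t] (fun s => Fc2 (x - 2 * s)) := by
    filter_upwards [eventually_lt_nhds (show t < x / 2 by linarith)] with a ha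
    exact P2 x a (by linarith)
  have hg : HasDerivAt (fun s : ℝ => x - 2 * s) (-2) t := by
    simpa using ((hasDerivAt_id t).const_mul (2:ℝ)).const_sub x
  have hd : HasDerivAt (fun s => Fc2 (x - 2 * s)) (Fc3 (x - 2 * t) * (-2)) t :=
    by have := (hF2_s2 (x - 2 * t) (by linarith)).comp t hg; exact this
  show deriv (fun s => px (px U) x s) t = _
  rw [hev.deriv_eq, hd.deriv]

lemma T2neg (x t : ℝ) (h : x < 2 * t) :
    pt (px (px U)) x t = Fc3 (2 * t - x) * 2 := by
  have hev : (fun s => px (px U) x s) =ᶠ[nhds t] (fun s => Fc2 (2 * s - x)) := by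
    filter_upwards [eventually_gt_nhds (show x / 2 < t by linarith)] with a ha
    exact N2 x a (by linarith)
  have hg : HasDerivAt (fun s : ℝ => 2 * s - x) 2 t := by
    simpa using ((hasDerivAt_id t).const_mul (2:ℝ)).sub_const x
  have hd : HasDerivAt (fun s => Fc2 (2 * s - x)) (Fc3 (2 * t - x) * 2) t :=
    by have := (hF2_s2 (2 * t - x) (by linarith)).comp t hg; exact this
  show deriv (fun s => px (px U) x s) t = _
  rw [hev.deriv_eq, hd.deriv]

lemma Usmooth (x t : ℝ) (hxt : x ≠ 2 * t) :
    ContDiffAt ℝ (⊤ : ℕ∞) (fun p : ℝ × ℝ => U p.1 p.2) (x, t) := by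
  rcases lt_or_gt_of_ne hxt with h | h
  · -- x < 2t : near (x,t), U p = Fc (2 p.2 - p.1)
    have hopen : IsOpen {p : ℝ × ℝ | p.1 < 2 * p.2} :=
      isOpen_lt continuous_fst (continuous_const.mul continuous_snd)
    have hev : (fun p : ℝ × ℝ => U p.1 p.2) =ᶠ[nhds (x, t)]
        (fun p : ℝ × ℝ => Fc (2 * p.2 - p.1)) := by
      filter_upwards [hopen.mem_nhds (by exact h)] with p hp
      unfold U
      rw [abs_of_neg (by simpa using sub_neg.2 hp)]
      ring_nf
    have hsm : ContDiffAt ℝ (⊤ : ℕ∞) (fun p : ℝ × ℝ => Fc (2 * p.2 - p.1)) (x, t) := by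
      have hin : ContDiffAt ℝ (⊤ : ℕ∞) (fun p : ℝ × ℝ => 2 * p.2 - p.1) (x, t) :=
        ((contDiff_const.mul contDiff_snd).sub contDiff_fst).contDiffAt
      have := (FcSmooth (2 * t - x) (by linarith)).comp (x, t) hin; exact this
    exact hsm.congr_of_eventuallyEq hev
  · have hopen : IsOpen {p : ℝ × ℝ | 2 * p.2 < p.1} :=
      isOpen_lt (continuous_const.mul continuous_snd) continuous_fst
    have hev : (fun p : ℝ × ℝ => U p.1 p.2) =ᶠ[nhds (x, t)]
        (fun p : ℝ × ℝ => Fc (p.1 - 2 * p.2)) := by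
      filter_upwards [hopen.mem_nhds (by exact h)] with p hp
      unfold U
      rw [abs_of_pos (by simpa using sub_pos.2 hp)]
    have hsm : ContDiffAt ℝ (⊤ : ℕ∞) (fun p : ℝ × ℝ => Fc (p.1 - 2 * p.2)) (x, t) := by
      have hin : ContDiffAt ℝ (⊤ : ℕ∞) (fun p : ℝ × ℝ => p.1 - 2 * p.2) (x, t) :=
        (contDiff_fst.sub (contDiff_const.mul contDiff_snd)).contDiffAt
      have := (FcSmooth (x - 2 * t) (by linarith)).comp (x, t) hin; exact this
    exact hsm.congr_of_eventuallyEq hev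

/-- The peakon `u(x,t) = 2 sinh⁻²(|x−2t|/2 + log(1+√2))` is, at every point off the crest
line `x = 2t`, smooth and a pointwise solution of the modified Camassa–Holm equation
`u_t − u_{xxt} + 3u²u_x = 2u_x u_{xx} + u u_{xxx}`. -/
theorem mCH_peakon (u : ℝ → ℝ → ℝ)
    (hu : u = fun x t =>
      2 / (Real.sinh (|x - 2 * t| / 2 + Real.log (1 + Real.sqrt 2))) ^ 2) :
    ∀ x t : ℝ, x ≠ 2 * t →
      ContDiffAt ℝ (⊤ : ℕ∞) (fun p : ℝ × ℝ => u p.1 p.2) (x, t) ∧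
      pt u x t - pt (px (px u)) x t + 3 * (u x t) ^ 2 * px u x t
        = 2 * px u x t * px (px u) x t + u x t * px (px (px u)) x t := by
  have hU : u = U := by subst hu; rfl
  subst hU
  intro x t hxt
  refine ⟨Usmooth x t hxt, ?_⟩
  rcases lt_or_gt_of_ne hxt with h | h
  · -- x < 2t
    have hr : (0:ℝ) ≤ 2 * t - x := by linarith
    have hUxt : U x t = Fc (2 * t - x) := by
      unfold U; rw [abs_of_neg (by linarith)]; ring_nf
    rw [hUxt, Tneg x t h, T2neg x t h, N1 x t h, N2 x t h, N3 x t h]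
    linear_combination -key_ident (2 * t - x) hr
  · -- 2t < x
    have hr : (0:ℝ) ≤ x - 2 * t := by linarith
    have hUxt : U x t = Fc (x - 2 * t) := by
      unfold U; rw [abs_of_pos (by linarith)]
    rw [hUxt, Tpos x t h, T2pos x t h, P1 x t h, P2 x t h, P3 x t h]
    linear_combination key_ident (x - 2 * t) hr
end

section
/- Let a > 0 and b ≠ 0 be real numbers, set c = 6a/b, and let C₀ ∈ ℝ. Then the function v₀(τ) = −c·cosh⁻²((√a)·τ/2 + C₀) satisfies, for every τ ∈ ℝ, the third-order ordinary differential equation (c − v₀(τ))·v₀'''(τ) − a·c·v₀'(τ) + b·v₀(τ)²·v₀'(τ) − 2·v₀'(τ)·v₀''(τ) = 0. -/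
private lemma soliton_key (a b s S K : ℝ) (hb : b ≠ 0) (hK : K ≠ 0)
    (hs : s ^ 2 = a) (hSK : S ^ 2 = K ^ 2 - 1) :
    (6 * a / b - (-(6 * a / b) / K ^ 2)) *
        (6 * a / b * a * s * (3 * S ^ 3 - 2 * S * K ^ 2) / K ^ 5)
      - a * (6 * a / b) * (6 * a / b * s * S / K ^ 3)
      + b * (-(6 * a / b) / K ^ 2) ^ 2 * (6 * a / b * s * S / K ^ 3)
      - 2 * (6 * a / b * s * S / K ^ 3) *
          (6 * a / b * a * (K ^ 2 - 3 * S ^ 2) / (2 * K ^ 4)) = 0 := by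
  field_simp
  linear_combination (108 * a ^ 3 * s * S * (K ^ 2 + 2)) * hSK

/-- The soliton profile `v₀(τ) = −c cosh⁻²(√a τ/2 + C₀)`, with `a > 0`, `b ≠ 0`,
`c = 6a/b`, satisfies the third-order profile equation
`(c − v₀)v₀''' − a c v₀' + b v₀² v₀' − 2 v₀' v₀'' = 0` on all of `ℝ`. -/
theorem soliton_profile_third_order_ODE (a b C₀ : ℝ) (ha : 0 < a) (hb : b ≠ 0)
    (c : ℝ) (hc : c = 6 * a / b) (v : ℝ → ℝ)
    (hv : v = fun τ => -c / (Real.cosh (Real.sqrt a * τ / 2 + C₀)) ^ 2) :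
    ∀ τ : ℝ,
      (c - v τ) * iteratedDeriv 3 v τ - a * c * deriv v τ
        + b * (v τ) ^ 2 * deriv v τ - 2 * deriv v τ * iteratedDeriv 2 v τ = 0 := by
  subst hv
  set s := Real.sqrt a with hsdef
  have hs2 : s ^ 2 = a := Real.sq_sqrt ha.le
  set g : ℝ → ℝ := fun t => s * t / 2 + C₀ with hgdef
  have hK0 : ∀ x, Real.cosh (g x) ≠ 0 := fun x => ne_of_gt (Real.cosh_pos (g x))
  have hg : ∀ x, HasDerivAt g (s / 2) x := by
    intro x
    simpa [hgdef] using (((hasDerivAt_id x).const_mul s).div_const 2).add_const C₀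
  have hK : ∀ x, HasDerivAt (fun t => Real.cosh (g t))
      (Real.sinh (g x) * (s / 2)) x := fun x => (hg x).cosh
  have hS : ∀ x, HasDerivAt (fun t => Real.sinh (g t))
      (Real.cosh (g x) * (s / 2)) x := fun x => (hg x).sinh
  -- first derivative
  have d1 : ∀ x, HasDerivAt (fun t => -c / Real.cosh (g t) ^ 2)
      (c * s * Real.sinh (g x) / Real.cosh (g x) ^ 3) x := by
    intro x
    have h := (hasDerivAt_const x (-c)).div ((hK x).pow 2)
      (pow_ne_zero 2 (hK0 x))
    refine h.congr_deriv ?_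
    simp only [Pi.pow_apply]
    field_simp [hK0 x]
    ring
  -- second derivative
  have d2 : ∀ x, HasDerivAt (fun t => c * s * Real.sinh (g t) / Real.cosh (g t) ^ 3)
      (c * a * (Real.cosh (g x) ^ 2 - 3 * Real.sinh (g x) ^ 2) /
        (2 * Real.cosh (g x) ^ 4)) x := by
    intro x
    have h := ((hS x).const_mul (c * s)).div ((hK x).pow 3)
      (pow_ne_zero 3 (hK0 x))
    refine h.congr_deriv ?_
    rw [← hs2]
    simp only [Pi.pow_apply]
    field_simp [hK0 x]
    ring
  -- third derivative
  have d3 : ∀ x, HasDerivAt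
      (fun t => c * a * (Real.cosh (g t) ^ 2 - 3 * Real.sinh (g t) ^ 2) /
        (2 * Real.cosh (g t) ^ 4))
      (c * a * s * (3 * Real.sinh (g x) ^ 3 - 2 * Real.sinh (g x) * Real.cosh (g x) ^ 2) /
        Real.cosh (g x) ^ 5) x := by
    intro x
    have hnum : HasDerivAt
        (fun t => c * a * (Real.cosh (g t) ^ 2 - 3 * Real.sinh (g t) ^ 2))
        (c * a * ((2 * Real.cosh (g x) ^ 1 * (Real.sinh (g x) * (s / 2)))
          - 3 * (2 * Real.sinh (g x) ^ 1 * (Real.cosh (g x) * (s / 2))))) x :=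
      (((hK x).pow 2).sub (((hS x).pow 2).const_mul 3)).const_mul (c * a)
    have hden : HasDerivAt (fun t => 2 * Real.cosh (g t) ^ 4)
        (2 * (4 * Real.cosh (g x) ^ 3 * (Real.sinh (g x) * (s / 2)))) x :=
      ((hK x).pow 4).const_mul 2
    have h := hnum.div hden (by
      have := hK0 x
      positivity)
    refine h.congr_deriv ?_
    field_simp [hK0 x]
    ring
  -- identify deriv and iterated derivs
  have hdv : deriv (fun t => -c / Real.cosh (g t) ^ 2)
      = fun x => c * s * Real.sinh (g x) / Real.cosh (g x) ^ 3 :=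
    funext fun x => (d1 x).deriv
  have hdv2 : iteratedDeriv 2 (fun t => -c / Real.cosh (g t) ^ 2)
      = fun x => c * a * (Real.cosh (g x) ^ 2 - 3 * Real.sinh (g x) ^ 2) /
        (2 * Real.cosh (g x) ^ 4) := by
    rw [iteratedDeriv_succ, iteratedDeriv_one, hdv]
    exact funext fun x => (d2 x).deriv
  have hdv3 : iteratedDeriv 3 (fun t => -c / Real.cosh (g t) ^ 2)
      = fun x => c * a * s * (3 * Real.sinh (g x) ^ 3
          - 2 * Real.sinh (g x) * Real.cosh (g x) ^ 2) / Real.cosh (g x) ^ 5 := by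
    rw [iteratedDeriv_succ, hdv2]
    exact funext fun x => (d3 x).deriv
  intro τ
  rw [hdv, hdv2, hdv3]
  simp only
  rw [hc]
  have := soliton_key a b s (Real.sinh (g τ)) (Real.cosh (g τ)) hb (hK0 τ) hs2
    (Real.sinh_sq _)
  linarith [this]
end

section
/- Let a > 0 and b ≠ 0 be real numbers, set c = 6a/b, and let C₀ ∈ ℝ. Then the function v₀(τ) = −c·cosh⁻²((√a)·τ/2 + C₀) satisfies, for every τ ∈ ℝ, the second-order ordinary differential equation (c − v₀(τ))·v₀''(τ) − (1/2)·(v₀'(τ))² − a·c·v₀(τ) + (1/3)·b·v₀(τ)³ = 0. -/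
/-!
Write `X = cosh φ`, `Y = sinh φ` for the phase `φ = kτ + C₀`. Then `v = -c/X²`,
`v' = 2ckY/X³` and `v'' = 2ck²(X² - 3Y²)/X⁴`; after clearing the denominator `X⁶`, the left
side of the equation is a polynomial that vanishes modulo `X² = 1 + Y²`, `4k² = a` and `bc = 6a`.
-/

open Real

noncomputable def sechSqProfile (c k C₀ τ : ℝ) : ℝ := -c / cosh (k * τ + C₀) ^ 2

section SechSqProfile

variable (c k C₀ : ℝ)

theorem hasDerivAt_sechSqProfile (τ : ℝ) :
    HasDerivAt (sechSqProfile c k C₀)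
      (2 * c * k * sinh (k * τ + C₀) / cosh (k * τ + C₀) ^ 3) τ := by
  have hφ : HasDerivAt (fun τ => k * τ + C₀) k τ := by
    simpa using ((hasDerivAt_id τ).const_mul k).add_const C₀
  have hcosh : cosh (k * τ + C₀) ≠ 0 := (cosh_pos _).ne'
  refine ((hasDerivAt_const τ (-c)).fun_div (hφ.cosh.fun_pow 2)
    (pow_ne_zero 2 hcosh)).congr_deriv ?_
  field_simp
  ring

theorem deriv_sechSqProfile :
    deriv (sechSqProfile c k C₀)
      = fun τ => 2 * c * k * sinh (k * τ + C₀) / cosh (k * τ + C₀) ^ 3 :=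
  funext fun τ => (hasDerivAt_sechSqProfile c k C₀ τ).deriv

theorem iteratedDeriv_two_sechSqProfile (τ : ℝ) :
    iteratedDeriv 2 (sechSqProfile c k C₀) τ
      = 2 * c * k ^ 2 * (cosh (k * τ + C₀) ^ 2 - 3 * sinh (k * τ + C₀) ^ 2)
          / cosh (k * τ + C₀) ^ 4 := by
  have hφ : HasDerivAt (fun τ => k * τ + C₀) k τ := by
    simpa using ((hasDerivAt_id τ).const_mul k).add_const C₀
  have hcosh : cosh (k * τ + C₀) ≠ 0 := (cosh_pos _).ne'
  rw [iteratedDeriv_succ, iteratedDeriv_one, deriv_sechSqProfile]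
  refine (((hφ.sinh.const_mul (2 * c * k)).fun_div (hφ.cosh.fun_pow 3)
    (pow_ne_zero 3 hcosh)).congr_deriv ?_).deriv
  field_simp
  ring

theorem sechSqProfile_profileEquation {a b : ℝ} (hk : 4 * k ^ 2 = a) (hbc : b * c = 6 * a)
    (τ : ℝ) :
    (c - sechSqProfile c k C₀ τ) * iteratedDeriv 2 (sechSqProfile c k C₀) τ
      - (1 / 2) * deriv (sechSqProfile c k C₀) τ ^ 2
      - a * c * sechSqProfile c k C₀ τ + (1 / 3) * b * sechSqProfile c k C₀ τ ^ 3 = 0 := by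
  rw [iteratedDeriv_two_sechSqProfile, deriv_sechSqProfile, sechSqProfile]
  have hcosh : cosh (k * τ + C₀) ≠ 0 := (cosh_pos _).ne'
  have hXY := cosh_sq (k * τ + C₀)
  set X := cosh (k * τ + C₀)
  set Y := sinh (k * τ + C₀)
  field_simp
  linear_combination c ^ 2 * X ^ 6 * ((24 * k ^ 2 + 18 * k ^ 2 * X ^ 2) * hXY
    - (3 * X ^ 4 - 6) * hk - hbc)

end SechSqProfile

/-- The soliton profile `v₀(τ) = −c cosh⁻²(√a τ/2 + C₀)`, with `a > 0`, `b ≠ 0`,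
`c = 6a/b`, satisfies the once-integrated profile equation
`(c − v₀)v₀'' − (1/2)(v₀')² − a c v₀ + (1/3) b v₀³ = 0` on all of `ℝ`. -/
theorem soliton_profile_second_order_ODE (a b C₀ : ℝ) (ha : 0 < a) (hb : b ≠ 0)
    (c : ℝ) (hc : c = 6 * a / b) (v : ℝ → ℝ)
    (hv : v = fun τ => -c / (Real.cosh (Real.sqrt a * τ / 2 + C₀)) ^ 2) :
    ∀ τ : ℝ,
      (c - v τ) * iteratedDeriv 2 v τ - (1 / 2) * (deriv v τ) ^ 2
        - a * c * v τ + (1 / 3) * b * (v τ) ^ 3 = 0 := by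
  have hv' : v = sechSqProfile c (√a / 2) C₀ := by
    subst hv
    funext τ
    simp only [sechSqProfile, mul_div_right_comm √a]
  have hk : 4 * (√a / 2) ^ 2 = a := by
    rw [div_pow, sq_sqrt ha.le]
    ring
  have hbc : b * c = 6 * a := by
    rw [hc, mul_div_cancel₀ _ hb]
  subst hv'
  exact sechSqProfile_profileEquation c (√a / 2) C₀ hk hbc
end

section
/- Let a > 0, b ≠ 0, ε > 0 and C₀ be real numbers, and set c = 6a/b. Then the function u(x,t) = −c·cosh⁻²((√a)·(x − c·t)/(2ε) + C₀) is a smooth classical solution of the singularly perturbed modified Camassa–Holm equation with constant coefficients on all of ℝ²: a·u_t − ε²·u_{xxt} + b·u²·u_x − 2ε²·u_x·u_{xx} − ε²·u·u_{xxx} = 0 for all (x,t) ∈ ℝ². -/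
/-- For `a > 0`, `b ≠ 0`, `ε > 0` and `c = 6a/b`, the traveling wave
`u(x,t) = −c cosh⁻²(√a (x−ct)/(2ε) + C₀)` is a smooth classical solution on `ℝ²` of the
singularly perturbed modified Camassa–Holm equation with constant coefficients
`a u_t − ε² u_{xxt} + b u² u_x − 2ε² u_x u_{xx} − ε² u u_{xxx} = 0`. -/
theorem perturbed_mCH_soliton (a b ε C₀ : ℝ) (ha : 0 < a) (hb : b ≠ 0) (hε : 0 < ε)
    (c : ℝ) (hc : c = 6 * a / b) (u : ℝ → ℝ → ℝ)
    (hu : u = fun x t =>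
      -c / (Real.cosh (Real.sqrt a * (x - c * t) / (2 * ε) + C₀)) ^ 2) :
    ContDiff ℝ (⊤ : ℕ∞) (fun p : ℝ × ℝ => u p.1 p.2) ∧
    (∀ x t : ℝ,
      a * pt u x t - ε ^ 2 * pt (px (px u)) x t + b * (u x t) ^ 2 * px u x t
        - 2 * ε ^ 2 * px u x t * px (px u) x t
        - ε ^ 2 * u x t * px (px (px u)) x t = 0) := by
  set k : ℝ := Real.sqrt a / (2 * ε) with hk
  have hε' : (2 : ℝ) * ε ≠ 0 := by positivity
  have hk2 : 4 * ε ^ 2 * k ^ 2 = a := by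
    have : Real.sqrt a ^ 2 = a := Real.sq_sqrt ha.le
    rw [hk, div_pow, this, mul_div_assoc', div_eq_iff (by positivity)]
    ring
  have hc0 : c ≠ 0 := by
    rw [hc]; exact div_ne_zero (by positivity) hb
  have hbc : b = 6 * a / c := by
    rw [hc]; field_simp
  -- the profile functions
  set g0 : ℝ → ℝ := fun θ => -c / (Real.cosh θ) ^ 2 with hg0
  set g1 : ℝ → ℝ := fun θ => 2 * c * Real.sinh θ / (Real.cosh θ) ^ 3 with hg1
  set g2 : ℝ → ℝ := fun θ => 2 * c * (3 - 2 * (Real.cosh θ) ^ 2) / (Real.cosh θ) ^ 4 with hg2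
  set g3 : ℝ → ℝ := fun θ =>
    2 * c * Real.sinh θ * (4 * (Real.cosh θ) ^ 2 - 12) / (Real.cosh θ) ^ 5 with hg3
  have hch : ∀ θ : ℝ, Real.cosh θ ≠ 0 := fun θ => (Real.cosh_pos θ).ne'
  have hsq : ∀ θ : ℝ, Real.sinh θ ^ 2 = Real.cosh θ ^ 2 - 1 := fun θ => by
    have := Real.cosh_sq_sub_sinh_sq θ; linarith
  have hd0 : ∀ θ : ℝ, HasDerivAt g0 (g1 θ) θ := by
    intro θ
    have h1 : HasDerivAt (fun θ : ℝ => (Real.cosh θ) ^ 2)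
        (2 * (Real.cosh θ) ^ 1 * Real.sinh θ) θ := (Real.hasDerivAt_cosh θ).pow 2
    have := (hasDerivAt_const θ (-c)).div h1 (pow_ne_zero 2 (hch θ))
    refine this.congr_deriv (Eq.symm ?_)
    simp only [hg1]
    field_simp
    ring
  have hd1 : ∀ θ : ℝ, HasDerivAt g1 (g2 θ) θ := by
    intro θ
    have hn : HasDerivAt (fun θ : ℝ => 2 * c * Real.sinh θ)
        (2 * c * Real.cosh θ) θ := (Real.hasDerivAt_sinh θ).const_mul (2 * c)
    have h1 : HasDerivAt (fun θ : ℝ => (Real.cosh θ) ^ 3)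
        (3 * (Real.cosh θ) ^ 2 * Real.sinh θ) θ := (Real.hasDerivAt_cosh θ).pow 3
    have := hn.div h1 (pow_ne_zero 3 (hch θ))
    refine this.congr_deriv (Eq.symm ?_)
    have hs := hsq θ
    simp only [hg2]
    rw [show 2 * c * Real.cosh θ * Real.cosh θ ^ 3 - 2 * c * Real.sinh θ * (3 * Real.cosh θ ^ 2 * Real.sinh θ)
      = 2 * c * Real.cosh θ ^ 4 - 6 * c * Real.cosh θ ^ 2 * Real.sinh θ ^ 2 by ring, hs]
    field_simp
    ring
  have hd2 : ∀ θ : ℝ, HasDerivAt g2 (g3 θ) θ := by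
    intro θ
    have hn : HasDerivAt (fun θ : ℝ => 2 * c * (3 - 2 * (Real.cosh θ) ^ 2))
        (2 * c * (-(2 * (2 * (Real.cosh θ) ^ 1 * Real.sinh θ)))) θ := by
      exact (((Real.hasDerivAt_cosh θ).pow 2).const_mul 2).const_sub 3 |>.const_mul (2 * c)
    have h1 : HasDerivAt (fun θ : ℝ => (Real.cosh θ) ^ 4)
        (4 * (Real.cosh θ) ^ 3 * Real.sinh θ) θ := (Real.hasDerivAt_cosh θ).pow 4
    have := hn.div h1 (pow_ne_zero 4 (hch θ))
    refine this.congr_deriv (Eq.symm ?_)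
    simp only [hg3]
    field_simp
    ring
  -- phase and its derivatives
  have hθx : ∀ x t : ℝ, HasDerivAt (fun y : ℝ => k * (y - c * t) + C₀) k x := by
    intro x t
    simpa using (((hasDerivAt_id x).sub_const (c * t)).const_mul k).add_const C₀
  have hθt : ∀ x t : ℝ, HasDerivAt (fun s : ℝ => k * (x - c * s) + C₀) (k * -c) t := by
    intro x t
    have h1 : HasDerivAt (fun s : ℝ => x - c * s) (-c) t := by
      simpa using ((hasDerivAt_id t).const_mul c).const_sub x
    simpa [mul_comm] using (h1.const_mul k).add_const C₀
  have hu' : u = fun x t => g0 (k * (x - c * t) + C₀) := by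
    rw [hu]
    funext x t
    simp only [hg0, hk]
    ring_nf
  -- spatial derivatives
  have hpx : px u = fun x t => k * g1 (k * (x - c * t) + C₀) := by
    funext x t
    have := ((hd0 (k * (x - c * t) + C₀)).comp x (hθx x t))
    rw [hu']
    simpa [px, mul_comm, Function.comp_def] using this.deriv
  have hpxx : px (px u) = fun x t => k ^ 2 * g2 (k * (x - c * t) + C₀) := by
    funext x t
    have := (((hd1 (k * (x - c * t) + C₀)).comp x (hθx x t)).const_mul k)
    simp only [Function.comp_def] at this
    rw [hpx]
    simp only [px]
    rw [this.deriv]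
    ring
  have hpxxx : px (px (px u)) = fun x t => k ^ 3 * g3 (k * (x - c * t) + C₀) := by
    funext x t
    have := (((hd2 (k * (x - c * t) + C₀)).comp x (hθx x t)).const_mul (k ^ 2))
    simp only [Function.comp_def] at this
    rw [hpxx]
    simp only [px]
    rw [this.deriv]
    ring
  -- time derivatives
  have hpt : ∀ x t : ℝ, pt u x t = -(k * c) * g1 (k * (x - c * t) + C₀) := by
    intro x t
    have := ((hd0 (k * (x - c * t) + C₀)).comp t (hθt x t))
    simp only [Function.comp_def] at this
    rw [hu']
    simp only [pt]
    rw [this.deriv]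
    ring
  have hptxx : ∀ x t : ℝ,
      pt (px (px u)) x t = -(k ^ 3 * c) * g3 (k * (x - c * t) + C₀) := by
    intro x t
    have := (((hd2 (k * (x - c * t) + C₀)).comp t (hθt x t)).const_mul (k ^ 2))
    simp only [Function.comp_def] at this
    rw [hpxx]
    simp only [pt]
    rw [this.deriv]
    ring
  constructor
  · rw [hu']
    have h1 : ContDiff ℝ (⊤ : ℕ∞) (fun p : ℝ × ℝ => k * (p.1 - c * p.2) + C₀) := by
      fun_prop
    have h2 : ContDiff ℝ (⊤ : ℕ∞) (fun p : ℝ × ℝ => Real.cosh (k * (p.1 - c * p.2) + C₀)) := h1.cosh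
    exact contDiff_const.div (h2.pow 2)
      (fun p => pow_ne_zero 2 (hch _))
  · intro x t
    rw [hpt, hptxx, hpxxx, hpxx, hpx, hu']
    simp only [hg0, hg1, hg2, hg3]
    rw [hbc, ← hk2]
    have h := hch (k * (x - c * t) + C₀)
    field_simp
    ring
end

section
/- Let a, b, c, g be real numbers and let I ⊆ ℝ be an interval. Suppose v, y : I → ℝ are differentiable and satisfy on I the planar system v'(τ) = y(τ) and (c − v(τ))·y'(τ) − a·c·v(τ) + (1/3)·b·v(τ)³ − (1/2)·y(τ)² = −g. Then the function H(τ) = 6·a·c·v(τ)² − b·v(τ)⁴ + 6·y(τ)²·v(τ) − 12·g·v(τ) − 6·c·y(τ)² is constant on I. -/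
/-! Along a solution, `dH/dτ = H_v · v' + H_y · y' = H_v · y + H_y · y'` equals `-12 y` times
the defect of the second equation of the system, so it vanishes; by the mean value inequality a
function with zero derivative on a convex set is constant there. -/

theorem Convex.is_const_of_hasDerivWithinAt_zero {𝕜 G : Type*} [RCLike 𝕜]
    [NormedAddCommGroup G] [NormedSpace 𝕜 G] {f : 𝕜 → G} {s : Set 𝕜} (hs : Convex ℝ s)
    (hf : ∀ x ∈ s, HasDerivWithinAt f 0 s x) {x y : 𝕜} (hx : x ∈ s) (hy : y ∈ s) :
    f x = f y := by
  have h := hs.norm_image_sub_le_of_norm_hasDerivWithin_le hf (fun _ _ => norm_zero.le) hy hx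
  rw [zero_mul, norm_le_zero_iff, sub_eq_zero] at h
  exact h

def profileFirstIntegral (a b c g v y : ℝ) : ℝ :=
  6 * a * c * v ^ 2 - b * v ^ 4 + 6 * y ^ 2 * v - 12 * g * v - 6 * c * y ^ 2

section

variable (a b c g : ℝ)

theorem hasDerivWithinAt_profileFirstIntegral {v y : ℝ → ℝ} {v' y' t : ℝ} {s : Set ℝ}
    (hv : HasDerivWithinAt v v' s t) (hy : HasDerivWithinAt y y' s t) :
    HasDerivWithinAt (fun τ => profileFirstIntegral a b c g (v τ) (y τ))
      ((12 * a * c * v t - 4 * b * v t ^ 3 + 6 * y t ^ 2 - 12 * g) * v'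
        + (12 * y t * v t - 12 * c * y t) * y') s t := by
  have hH := (((((hv.pow 2).const_mul (6 * a * c)).sub ((hv.pow 4).const_mul b)).add
    (((hy.pow 2).const_mul 6).mul hv)).sub (hv.const_mul (12 * g))).sub
    ((hy.pow 2).const_mul (6 * c))
  refine hH.congr_deriv ?_
  simp only [Pi.pow_apply]
  ring

theorem profileFirstIntegral_gradient_along_field {v y y' : ℝ}
    (h : (c - v) * y' - a * c * v + (1 / 3) * b * v ^ 3 - (1 / 2) * y ^ 2 = -g) :
    (12 * a * c * v - 4 * b * v ^ 3 + 6 * y ^ 2 - 12 * g) * y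
      + (12 * y * v - 12 * c * y) * y' = 0 := by
  linear_combination (-12 * y) * h

end

/-- For the planar profile system `v' = y`,
`(c − v)y' − a c v + (1/3) b v³ − (1/2) y² = −g` on an interval `I`, the quantity
`H = 6 a c v² − b v⁴ + 6 y² v − 12 g v − 6 c y²` is a first integral: it is constant
on `I`. -/
theorem first_integral_of_profile_system (a b c g : ℝ) (I : Set ℝ) (hI : Convex ℝ I)
    (v y y' : ℝ → ℝ)
    (hv : ∀ τ ∈ I, HasDerivWithinAt v (y τ) I τ)
    (hy : ∀ τ ∈ I, HasDerivWithinAt y (y' τ) I τ)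
    (heq : ∀ τ ∈ I,
      (c - v τ) * y' τ - a * c * v τ + (1 / 3) * b * (v τ) ^ 3
        - (1 / 2) * (y τ) ^ 2 = -g) :
    ∀ τ₁ ∈ I, ∀ τ₂ ∈ I,
      6 * a * c * (v τ₁) ^ 2 - b * (v τ₁) ^ 4 + 6 * (y τ₁) ^ 2 * v τ₁
          - 12 * g * v τ₁ - 6 * c * (y τ₁) ^ 2
        = 6 * a * c * (v τ₂) ^ 2 - b * (v τ₂) ^ 4 + 6 * (y τ₂) ^ 2 * v τ₂
          - 12 * g * v τ₂ - 6 * c * (y τ₂) ^ 2 := by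
  intro τ₁ hτ₁ τ₂ hτ₂
  have hH : ∀ τ ∈ I,
      HasDerivWithinAt (fun t => profileFirstIntegral a b c g (v t) (y t)) 0 I τ :=
    fun τ hτ => (hasDerivWithinAt_profileFirstIntegral a b c g (hv τ hτ) (hy τ hτ)).congr_deriv
      (profileFirstIntegral_gradient_along_field a b c g (heq τ hτ))
  exact hI.is_const_of_hasDerivWithinAt_zero hH hτ₁ hτ₂
end

section
/- Let a > 0 and b > 0 be real numbers and set c = 6a/b. Define v(τ) = c·sinh⁻²((√a)·τ/2 + log(1+√2)) for τ ≥ 0. Then: (i) v(0) = c; (ii) for every τ > 0, (v'(τ))² = (1/6)·b·v(τ)²·(v(τ) + c); and (iii) for every τ > 0, v'(τ) = −(v(τ)/√6)·√(b·(v(τ) + c)). -/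
/-! With `u = √a τ / 2 + arsinh 1`, the profile is `v = c / sinh² u`, so `v(0) = c` and
`v' = -c √a cosh u / sinh³ u`. Since `cosh² = 1 + sinh²`, `v + c = c coth² u`, and
`b c = 6 a` turns `√(b (v + c))` into `√(6a) coth u`, which gives (iii); squaring gives (ii). -/

open Real

theorem Real.arsinh_one : arsinh 1 = log (1 + √2) := by
  norm_num [arsinh]

theorem Real.sinh_log_one_add_sqrt_two : sinh (log (1 + √2)) = 1 := by
  rw [← arsinh_one, sinh_arsinh]

theorem Real.const_div_sinh_sq_add_self (c : ℝ) {x : ℝ} (hx : sinh x ≠ 0) :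
    c / sinh x ^ 2 + c = c * (cosh x / sinh x) ^ 2 := by
  rw [div_pow, cosh_sq]
  field_simp
  ring

theorem Real.sqrt_mul_const_div_sinh_sq_add_self {b c x : ℝ} (hbc : 0 ≤ b * c)
    (hx : 0 < sinh x) : √(b * (c / sinh x ^ 2 + c)) = √(b * c) * (cosh x / sinh x) := by
  rw [const_div_sinh_sq_add_self c hx.ne', ← mul_assoc, sqrt_mul hbc,
    sqrt_sq (div_pos (cosh_pos x) hx).le]

theorem Real.hasDerivAt_const_div_sinh_sq_comp {f : ℝ → ℝ} {f' x : ℝ} (c : ℝ)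
    (hf : HasDerivAt f f' x) (hx : sinh (f x) ≠ 0) :
    HasDerivAt (fun y => c / sinh (f y) ^ 2)
      (-(2 * c * cosh (f x) / sinh (f x) ^ 3) * f') x := by
  refine ((hasDerivAt_const x c).div (hf.sinh.pow 2) (pow_ne_zero 2 hx)).congr_deriv ?_
  simp only [Pi.pow_apply]
  field_simp
  ring

/-- For `a > 0`, `b > 0`, `c = 6a/b`, the peakon half-profile
`v(τ) = c sinh⁻²(√a τ/2 + log(1+√2))` satisfies `v(0) = c`, and for `τ > 0` the
first-order equations `(v')² = (1/6) b v² (v + c)` and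
`v' = −(v/√6)√(b(v + c))`. -/
theorem peakon_half_profile_first_order (a b : ℝ) (ha : 0 < a) (hb : 0 < b)
    (c : ℝ) (hc : c = 6 * a / b) (v : ℝ → ℝ)
    (hv : v = fun τ =>
      c / (Real.sinh (Real.sqrt a * τ / 2 + Real.log (1 + Real.sqrt 2))) ^ 2) :
    v 0 = c ∧
    (∀ τ : ℝ, 0 < τ →
      (deriv v τ) ^ 2 = (1 / 6) * b * (v τ) ^ 2 * (v τ + c)) ∧
    (∀ τ : ℝ, 0 < τ →
      deriv v τ = -(v τ / Real.sqrt 6) * Real.sqrt (b * (v τ + c))) := by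
  subst hv
  set u : ℝ → ℝ := fun τ => √a * τ / 2 + log (1 + √2)
  have hu : ∀ τ, 0 < τ → 0 < sinh (u τ) := fun τ hτ => sinh_pos_iff.mpr <| by
    have : 0 < log (1 + √2) := log_pos (by simp)
    positivity
  have hbc : b * c = 6 * a := by rw [hc]; field_simp
  have hc0 : 0 ≤ c := hc ▸ by positivity
  have hderiv : ∀ τ, 0 < τ → deriv (fun τ => c / sinh (u τ) ^ 2) τ
      = -(2 * c * cosh (u τ) / sinh (u τ) ^ 3) * (√a * 1 / 2) := fun τ hτ =>
    (hasDerivAt_const_div_sinh_sq_comp c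
      ((((hasDerivAt_id τ).const_mul √a).div_const 2).add_const _) (hu τ hτ).ne').deriv
  have hfirst_order : ∀ τ, 0 < τ → deriv (fun τ => c / sinh (u τ) ^ 2) τ
      = -(c / sinh (u τ) ^ 2 / √6) * √(b * (c / sinh (u τ) ^ 2 + c)) := by
    intro τ hτ
    rw [hderiv τ hτ, sqrt_mul_const_div_sinh_sq_add_self (by positivity) (hu τ hτ), hbc,
      sqrt_mul (by norm_num)]
    field_simp
  refine ⟨by simp [sinh_log_one_add_sqrt_two], fun τ hτ => ?_, hfirst_order⟩
  rw [hfirst_order τ hτ, mul_pow, neg_sq, div_pow, sq_sqrt (by norm_num), sq_sqrt (by positivity)]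
  ring
end

section
/- Let a > 0 and b > 0 be real numbers and set c = 6a/b. Define v(τ) = c·sinh⁻²((√a)·τ/2 + log(1+√2)). Then for every τ > 0, the function v satisfies the second-order ordinary differential equation (c − v(τ))·v''(τ) − (1/2)·(v'(τ))² − a·c·v(τ) + (1/3)·b·v(τ)³ = 0. -/
/-!
With `S = sinh (k τ + L)` and `C = cosh (k τ + L)`, the profile `v = c / S²` has
`v' = -2ck C / S³` and, using `C² = 1 + S²`, `v'' = 2ck² (3 + 2S²) / S⁴`. Substituting
and putting `a = 4k²`, every power of `S` cancels from the residual of the profile equation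
except a constant term: it equals `c² (b c - 6a) / (3 S⁶)`, which vanishes for `c = 6a/b`
(trivially when `b = 0`, as then `c = 0`). The shift `L = log (1 + √2) > 0` keeps `S`
away from zero for `τ > 0`.
-/

open Real Filter Topology

noncomputable def peakonProfile (c k L : ℝ) (τ : ℝ) : ℝ :=
  c / sinh (k * τ + L) ^ 2

section PeakonProfile

variable (c k L : ℝ) {τ : ℝ}

theorem hasDerivAt_sinh_mul_add (τ : ℝ) :
    HasDerivAt (fun t => sinh (k * t + L)) (cosh (k * τ + L) * k) τ :=
  (hasDerivAt_sinh _).comp τ <|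
    ((hasDerivAt_id τ).const_mul k).add_const L |>.congr_deriv (mul_one k)

theorem hasDerivAt_cosh_mul_add (τ : ℝ) :
    HasDerivAt (fun t => cosh (k * t + L)) (sinh (k * τ + L) * k) τ :=
  (hasDerivAt_cosh _).comp τ <|
    ((hasDerivAt_id τ).const_mul k).add_const L |>.congr_deriv (mul_one k)

theorem hasDerivAt_peakonProfile (h : sinh (k * τ + L) ≠ 0) :
    HasDerivAt (peakonProfile c k L)
      (-2 * c * k * (cosh (k * τ + L) / sinh (k * τ + L) ^ 3)) τ := by
  refine ((hasDerivAt_const τ c).fun_div ((hasDerivAt_sinh_mul_add k L τ).fun_pow 2)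
    (pow_ne_zero 2 h)).congr_deriv ?_
  field_simp
  ring

theorem hasDerivAt_cosh_div_sinh_pow_three (h : sinh (k * τ + L) ≠ 0) :
    HasDerivAt (fun t => cosh (k * t + L) / sinh (k * t + L) ^ 3)
      (-k * (3 + 2 * sinh (k * τ + L) ^ 2) / sinh (k * τ + L) ^ 4) τ := by
  refine ((hasDerivAt_cosh_mul_add k L τ).div ((hasDerivAt_sinh_mul_add k L τ).fun_pow 3)
    (pow_ne_zero 3 h)).congr_deriv ?_
  field_simp
  linear_combination -3 * k * sinh (k * τ + L) ^ 2 * cosh_sq' (k * τ + L)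

theorem iteratedDeriv_two_peakonProfile (h : sinh (k * τ + L) ≠ 0) :
    iteratedDeriv 2 (peakonProfile c k L) τ
      = 2 * c * k ^ 2 * (3 + 2 * sinh (k * τ + L) ^ 2) / sinh (k * τ + L) ^ 4 := by
  have hderiv : deriv (peakonProfile c k L) =ᶠ[𝓝 τ]
      fun t => -2 * c * k * (cosh (k * t + L) / sinh (k * t + L) ^ 3) := by
    have hcont : Continuous fun t => sinh (k * t + L) := by fun_prop
    filter_upwards [hcont.continuousAt.eventually_ne h] with t ht
    exact (hasDerivAt_peakonProfile c k L ht).deriv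
  rw [iteratedDeriv_succ, iteratedDeriv_one, hderiv.deriv_eq,
    ((hasDerivAt_cosh_div_sinh_pow_three k L h).const_mul _).deriv]
  ring

theorem peakonProfile_residual (b : ℝ) {a : ℝ} (hk : 4 * k ^ 2 = a)
    (h : sinh (k * τ + L) ≠ 0) :
    (c - peakonProfile c k L τ) * iteratedDeriv 2 (peakonProfile c k L) τ
        - 1 / 2 * deriv (peakonProfile c k L) τ ^ 2
        - a * c * peakonProfile c k L τ + 1 / 3 * b * peakonProfile c k L τ ^ 3
      = c ^ 2 * (b * c - 6 * a) / (3 * sinh (k * τ + L) ^ 6) := by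
  rw [iteratedDeriv_two_peakonProfile c k L h, (hasDerivAt_peakonProfile c k L h).deriv,
    peakonProfile, ← hk]
  field_simp
  linear_combination -6 * c ^ 2 * k ^ 2 * cosh_sq' (k * τ + L)

end PeakonProfile

theorem mul_mul_sub_eq_zero_of_eq_div {K : Type*} [Field K] {b c x : K} (hc : c = x / b) :
    c * (b * c - x) = 0 := by
  rcases eq_or_ne b 0 with rfl | hb
  · simp [hc]
  · rw [hc, mul_div_cancel₀ x hb, sub_self, mul_zero]

theorem peakon_half_profile_second_order_general (a b : ℝ) (ha : 0 < a)
    (c : ℝ) (hc : c = 6 * a / b) (v : ℝ → ℝ)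
    (hv : v = fun τ =>
      c / (Real.sinh (Real.sqrt a * τ / 2 + Real.log (1 + Real.sqrt 2))) ^ 2) :
    ∀ τ : ℝ, 0 < τ →
      (c - v τ) * iteratedDeriv 2 v τ - (1 / 2) * (deriv v τ) ^ 2
        - a * c * v τ + (1 / 3) * b * (v τ) ^ 3 = 0 := by
  intro τ hτ
  have hv' : v = peakonProfile c (√a / 2) (log (1 + √2)) := by
    rw [hv]
    funext t
    rw [peakonProfile, div_mul_eq_mul_div]
  have hk : 4 * (√a / 2) ^ 2 = a := by
    rw [div_pow, sq_sqrt ha.le]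
    ring
  have hL : 0 < log (1 + √2) := log_pos (lt_add_of_pos_right 1 (sqrt_pos.mpr two_pos))
  have hS : sinh (√a / 2 * τ + log (1 + √2)) ≠ 0 :=
    (sinh_pos_iff.mpr (by positivity)).ne'
  rw [hv', peakonProfile_residual _ _ _ b hk hS, sq, mul_assoc,
    mul_mul_sub_eq_zero_of_eq_div hc, mul_zero, zero_div]

/-- For `a > 0`, `b > 0`, `c = 6a/b`, the peakon half-profile
`v(τ) = c sinh⁻²(√a τ/2 + log(1+√2))` satisfies, for every `τ > 0`, the once-integrated
profile equation `(c − v)v'' − (1/2)(v')² − a c v + (1/3) b v³ = 0`. -/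
theorem peakon_half_profile_second_order (a b : ℝ) (ha : 0 < a) (hb : 0 < b)
    (c : ℝ) (hc : c = 6 * a / b) (v : ℝ → ℝ)
    (hv : v = fun τ =>
      c / (Real.sinh (Real.sqrt a * τ / 2 + Real.log (1 + Real.sqrt 2))) ^ 2) :
    ∀ τ : ℝ, 0 < τ →
      (c - v τ) * iteratedDeriv 2 v τ - (1 / 2) * (deriv v τ) ^ 2
        - a * c * v τ + (1 / 3) * b * (v τ) ^ 3 = 0 :=
  peakon_half_profile_second_order_general a b ha c hc v hv
end
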